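/- Let c ∈ [0,1), 0 < δ ≤ q, and λ ≥ 0 with δλ ≤ 1 and qλ ≤ 1+c. Then for every nonnegative integer k, the second coordinate of A(λ)^k · (1,1)ᵀ satisfies |(A(λ)^k (1,1)ᵀ)_2| ≤ 1 when λ ∈ I₁ ∪ I₃ and |(A(λ)^k (1,1)ᵀ)_2| ≤ 2 when λ ∈ I₂, where A(λ) = [[0, 1−δλ],[−c, 1+c−qλ]]. -/

import Mathlib

open Matrix Real

noncomputable section

/-- The 2×2 momentum matrix `A(λ) = [[0, 1−δλ], [−c, 1+c−qλ]]`. -/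
def Amat (c δ q lam : ℝ) : Matrix (Fin 2) (Fin 2) ℝ :=
  !![0, 1 - δ * lam; -c, 1 + c - q * lam]

/-- `λ† = (1−c)²/(√(q−cδ) + √(c(q−δ)))²`. -/
def lamDagger (c δ q : ℝ) : ℝ :=
  (1 - c) ^ 2 / (Real.sqrt (q - c * δ) + Real.sqrt (c * (q - δ))) ^ 2

/-- `λ‡ = (1−c)²/(√(q−cδ) − √(c(q−δ)))²`. -/
def lamDDagger (c δ q : ℝ) : ℝ :=
  (1 - c) ^ 2 / (Real.sqrt (q - c * δ) - Real.sqrt (c * (q - δ))) ^ 2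

/-!
The coordinates `y k = (A^k (1,1)ᵀ)₂` satisfy the Cayley–Hamilton recurrence
`y (k+2) = s y (k+1) - p y k` with `s = tr A = 1 + c - qλ`, `p = det A = c(1 - δλ)`, `y 0 = 1`,
`y 1 = 1 - qλ`, and the discriminant `s² - 4p` equals `q² (λ - λ†)(λ - λ‡)`.

On `I₁ ∪ I₃` the characteristic roots are real with `0 ≤ μ₂ ≤ μ₁ ≤ 1`, and
`(y 1 - μ₁)(y 1 - μ₂) = cλ(q - δ) ≥ 0` puts `y 1` outside `(μ₂, μ₁)`. Factoring out the root `ρ`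
on the side of `y 1` gives `y (k+1) = ρ y k + σ^k (y 1 - ρ)` with `ρ + |y 1 - ρ| ≤ 1`, so
`|y k| ≤ 1` by induction.

On `I₂` the roots `μ, μ̄` have modulus `r = √p < 1` and
`y k = Re μ^k + (y 1 - Re μ) ∑ μ^i μ̄^(k-1-i)`. The geometric sum is at most `k r^(k-1)` and at
most `2 r^k / |μ - μ̄|`; whenever the second bound is too weak, `|y 1 - Re μ| ≤ 1 - r²`, and then
the first one suffices because `k r^(k-1) (1 - r²) ≤ 1`.
-/

open Finset ComplexConjugate

section Recurrence

variable {R : Type*} [CommRing R] {y : ℕ → R} {μ ν : R}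

theorem sub_mul_eq_pow_mul_of_rec (hrec : ∀ n, y (n + 2) = (μ + ν) * y (n + 1) - μ * ν * y n)
    (n : ℕ) : y (n + 1) - μ * y n = ν ^ n * (y 1 - μ * y 0) := by
  induction n with
  | zero => simp
  | succ n ih => linear_combination hrec n + ν * ih

theorem eq_pow_mul_add_geom_sum₂_of_rec
    (hrec : ∀ n, y (n + 2) = (μ + ν) * y (n + 1) - μ * ν * y n) (n : ℕ) :
    y n = μ ^ n * y 0 + (y 1 - μ * y 0) * ∑ i ∈ range n, ν ^ i * μ ^ (n - 1 - i) := by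
  induction n with
  | zero => simp
  | succ n ih =>
    rw [Nat.add_sub_cancel, geom_sum₂_succ_eq]
    linear_combination sub_mul_eq_pow_mul_of_rec hrec n + μ * ih

theorem two_mul_eq_pow_add_pow_add_geom_sum₂_of_rec
    (hrec : ∀ n, y (n + 2) = (μ + ν) * y (n + 1) - μ * ν * y n) (n : ℕ) :
    2 * y n = (μ ^ n + ν ^ n) * y 0 +
      (2 * y 1 - (μ + ν) * y 0) * ∑ i ∈ range n, μ ^ i * ν ^ (n - 1 - i) := by
  have hrec' : ∀ n, y (n + 2) = (ν + μ) * y (n + 1) - ν * μ * y n := by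
    simpa only [add_comm μ, mul_comm μ] using hrec
  have h₁ := eq_pow_mul_add_geom_sum₂_of_rec hrec n
  have h₂ := eq_pow_mul_add_geom_sum₂_of_rec hrec' n
  rw [geom_sum₂_comm] at h₁
  linear_combination h₁ + h₂

end Recurrence

theorem pow_add_two_mulVec {ι R : Type*} [Fintype ι] [DecidableEq ι] [CommRing R]
    {A : Matrix ι ι R} {s p : R} (hA : A ^ 2 = s • A - p • 1) (v : ι → R) (n : ℕ) :
    A ^ (n + 2) *ᵥ v = s • (A ^ (n + 1) *ᵥ v) - p • (A ^ n *ᵥ v) := by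
  rw [pow_add, hA, mul_sub, mul_smul_comm, mul_smul_comm, mul_one, ← pow_succ, sub_mulVec,
    smul_mulVec, smul_mulVec]

theorem abs_le_one_of_sub_mul_eq {y : ℕ → ℝ} {ρ σ d : ℝ}
    (h : ∀ n, y (n + 1) - ρ * y n = σ ^ n * d) (h0 : |y 0| ≤ 1) (hρ : 0 ≤ ρ) (hσ : |σ| ≤ 1)
    (hρd : ρ + |d| ≤ 1) (n : ℕ) : |y n| ≤ 1 := by
  induction n with
  | zero => exact h0
  | succ n ih =>
    have hσn : |σ| ^ n ≤ 1 := pow_le_one₀ (abs_nonneg σ) hσ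
    calc |y (n + 1)| = |ρ * y n + σ ^ n * d| := by rw [← h n, add_sub_cancel]
      _ ≤ |ρ * y n| + |σ ^ n * d| := abs_add_le _ _
      _ = ρ * |y n| + |σ| ^ n * |d| := by rw [abs_mul, abs_mul, abs_pow, abs_of_nonneg hρ]
      _ ≤ ρ * 1 + 1 * |d| := by gcongr
      _ ≤ 1 := by linarith

theorem abs_le_one_of_rec_of_real_roots {y : ℕ → ℝ} {μ₁ μ₂ : ℝ}
    (hrec : ∀ n, y (n + 2) = (μ₁ + μ₂) * y (n + 1) - μ₁ * μ₂ * y n) (h0 : y 0 = 1)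
    (hμ₂ : 0 ≤ μ₂) (hμ : μ₂ ≤ μ₁) (hμ₁ : μ₁ ≤ 1) (hy₁ : y 1 ≤ 1) (hy₁' : μ₁ + μ₂ ≤ y 1 + 1)
    (hsep : 0 ≤ (y 1 - μ₁) * (y 1 - μ₂)) (n : ℕ) : |y n| ≤ 1 := by
  have h0' : |y 0| ≤ 1 := by simp [h0]
  rcases le_or_gt μ₁ (y 1) with h | h
  · refine abs_le_one_of_sub_mul_eq (sub_mul_eq_pow_mul_of_rec hrec) h0' (hμ₂.trans hμ)
      (abs_le.2 ⟨by linarith, by linarith⟩) ?_ n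
    rw [h0, mul_one, abs_of_nonneg (sub_nonneg.2 h)]
    linarith
  · have hrec' : ∀ n, y (n + 2) = (μ₂ + μ₁) * y (n + 1) - μ₂ * μ₁ * y n := by
      simpa only [add_comm μ₁, mul_comm μ₁] using hrec
    have hy₁μ₂ : y 1 ≤ μ₂ := by nlinarith
    refine abs_le_one_of_sub_mul_eq (sub_mul_eq_pow_mul_of_rec hrec') h0' hμ₂
      (abs_le.2 ⟨by linarith, hμ₁⟩) ?_ n
    rw [h0, mul_one, abs_of_nonpos (sub_nonpos.2 hy₁μ₂)]
    linarith

theorem norm_geom_sum₂_le {R : Type*} [NormedCommRing R] [NormOneClass R] {x y : R} {r : ℝ}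
    (hx : ‖x‖ ≤ r) (hy : ‖y‖ ≤ r) (n : ℕ) :
    ‖∑ i ∈ range n, x ^ i * y ^ (n - 1 - i)‖ ≤ n * r ^ (n - 1) := by
  have hr : 0 ≤ r := (norm_nonneg x).trans hx
  refine (norm_sum_le _ _).trans ?_
  refine (sum_le_card_nsmul _ _ (r ^ (n - 1)) fun i hi => ?_).trans_eq (by simp)
  calc ‖x ^ i * y ^ (n - 1 - i)‖ ≤ r ^ i * r ^ (n - 1 - i) := by
        refine (norm_mul_le _ _).trans (mul_le_mul ?_ ?_ (norm_nonneg _) (pow_nonneg hr _)) <;>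
          exact (norm_pow_le _ _).trans (pow_le_pow_left₀ (norm_nonneg _) ‹_› _)
    _ = r ^ (n - 1) := by rw [← pow_add]; congr 1; have := mem_range.1 hi; omega

theorem norm_geom_sum₂_mul_norm_sub_le {R : Type*} [NormedField R]
    {x y : R} {r : ℝ} (hx : ‖x‖ ≤ r) (hy : ‖y‖ ≤ r) (n : ℕ) :
    ‖∑ i ∈ range n, x ^ i * y ^ (n - 1 - i)‖ * ‖x - y‖ ≤ 2 * r ^ n := by
  have hr : 0 ≤ r := (norm_nonneg x).trans hx
  have hpow : ∀ z : R, ‖z‖ ≤ r → ‖z ^ n‖ ≤ r ^ n := fun z hz =>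
    (norm_pow_le _ _).trans (pow_le_pow_left₀ (norm_nonneg _) hz _)
  calc _ ≤ ‖x ^ n - y ^ n‖ := by rw [← geom_sum₂_mul, norm_mul]
    _ ≤ ‖x ^ n‖ + ‖y ^ n‖ := norm_sub_le _ _
    _ ≤ 2 * r ^ n := by linarith [hpow x hx, hpow y hy]

theorem succ_mul_pow_mul_one_sub_sq_le {r : ℝ} (h0 : 0 ≤ r) (h1 : r ≤ 1) (n : ℕ) :
    (n + 1) * r ^ n * (1 - r ^ 2) ≤ 1 - (r ^ (n + 1)) ^ 2 := by
  have hr2 : 0 ≤ 1 - r ^ 2 := by nlinarith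
  induction n using Nat.twoStepInduction with
  | zero => simp
  | one =>
    norm_num
    nlinarith [mul_nonneg hr2 (sq_nonneg (1 - r))]
  | more n ih _ =>
    push_cast at ih ⊢
    have key : (1 - (r ^ (n + 3)) ^ 2) - (n + 3) * r ^ (n + 2) * (1 - r ^ 2) =
        r ^ 2 * ((1 - (r ^ (n + 1)) ^ 2) - (n + 1) * r ^ n * (1 - r ^ 2)) +
          (1 - r ^ 2) * (1 - r ^ (n + 2)) ^ 2 := by ring
    linarith [mul_nonneg (sq_nonneg r) (sub_nonneg.2 ih),
      mul_nonneg hr2 (sq_nonneg (1 - r ^ (n + 2)))]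

theorem abs_le_pow_add_mul_norm_geom_sum₂_of_rec {y : ℕ → ℝ} {μ : ℂ}
    (hrec : ∀ n, y (n + 2) = 2 * μ.re * y (n + 1) - ‖μ‖ ^ 2 * y n) (h0 : y 0 = 1) (n : ℕ) :
    |y n| ≤ ‖μ‖ ^ n +
      |y 1 - μ.re| * ‖∑ i ∈ range n, μ ^ i * conj μ ^ (n - 1 - i)‖ := by
  have hrecℂ : ∀ n, (y (n + 2) : ℂ) = (μ + conj μ) * y (n + 1) - μ * conj μ * y n := by
    intro n
    rw [Complex.add_conj, Complex.mul_conj, Complex.normSq_eq_norm_sq, hrec n]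
    push_cast
    ring
  have h := two_mul_eq_pow_add_pow_add_geom_sum₂_of_rec (y := fun k => (y k : ℂ)) hrecℂ n
  rw [h0, Complex.add_conj] at h
  set G := ∑ i ∈ range n, μ ^ i * conj μ ^ (n - 1 - i)
  have key : (2 : ℂ) * y n = μ ^ n + conj μ ^ n + ((2 * (y 1 - μ.re) : ℝ) : ℂ) * G := by
    rw [h]; push_cast; ring
  have hbound : 2 * |y n| ≤ 2 * (‖μ‖ ^ n + |y 1 - μ.re| * ‖G‖) :=
    calc 2 * |y n| = ‖(2 : ℂ) * y n‖ := by simp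
      _ ≤ ‖μ ^ n‖ + ‖conj μ ^ n‖ + ‖((2 * (y 1 - μ.re) : ℝ) : ℂ) * G‖ := by
        rw [key]; exact norm_add₃_le
      _ = 2 * (‖μ‖ ^ n + |y 1 - μ.re| * ‖G‖) := by
        simp only [norm_pow, norm_mul, Complex.norm_conj, Complex.norm_real, Real.norm_eq_abs,
          abs_two]
        ring
  linarith

theorem abs_le_two_of_rec_of_complex_root {y : ℕ → ℝ} {μ : ℂ}
    (hrec : ∀ n, y (n + 2) = 2 * μ.re * y (n + 1) - ‖μ‖ ^ 2 * y n) (h0 : y 0 = 1)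
    (hμ : ‖μ‖ ≤ 1) (him : μ.im ≠ 0)
    (hy₁ : (y 1 - μ.re) ^ 2 * ‖μ‖ ^ 2 ≤ μ.im ^ 2 ∨ |y 1 - μ.re| + ‖μ‖ ^ 2 ≤ 1) (n : ℕ) :
    |y n| ≤ 2 := by
  obtain _ | n := n
  · simp [h0]
  set D := |y 1 - μ.re|
  set G := ∑ i ∈ range (n + 1), μ ^ i * conj μ ^ (n - i)
  have hD : 0 ≤ D := abs_nonneg _
  have hpow : ‖μ‖ ^ n ≤ 1 := pow_le_one₀ (norm_nonneg _) hμ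
  have hDG : D * ‖G‖ ≤ 1 := by
    rcases hy₁ with h | h
    · have hDμ : D * ‖μ‖ ≤ |μ.im| := by
        rw [← abs_of_nonneg (by positivity : 0 ≤ D * ‖μ‖)]
        exact sq_le_sq.1 (by rwa [mul_pow, sq_abs])
      have hsub : ‖μ - conj μ‖ = 2 * |μ.im| := by
        rw [Complex.sub_conj, norm_mul, Complex.norm_I, Complex.norm_real, Real.norm_eq_abs,
          abs_mul, abs_two, mul_one]
      have hG := norm_geom_sum₂_mul_norm_sub_le le_rfl (Complex.norm_conj μ).le (n + 1)
      rw [hsub, Nat.add_sub_cancel] at hG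
      refine le_of_mul_le_mul_left ?_ (abs_pos.2 him)
      calc |μ.im| * (D * ‖G‖) = D * (‖G‖ * (2 * |μ.im|)) / 2 := by ring
        _ ≤ D * (2 * ‖μ‖ ^ (n + 1)) / 2 := by gcongr
        _ = D * ‖μ‖ * ‖μ‖ ^ n := by ring
        _ ≤ |μ.im| * 1 := by gcongr
    · have hG := norm_geom_sum₂_le le_rfl (Complex.norm_conj μ).le (n + 1)
      have hsq := succ_mul_pow_mul_one_sub_sq_le (norm_nonneg μ) hμ n
      rw [Nat.add_sub_cancel] at hG
      push_cast at hG
      calc D * ‖G‖ ≤ (1 - ‖μ‖ ^ 2) * ((n + 1) * ‖μ‖ ^ n) := by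
            gcongr
            · nlinarith
            · linarith
        _ ≤ 1 := by nlinarith [sq_nonneg (‖μ‖ ^ (n + 1))]
  have := abs_le_pow_add_mul_norm_geom_sum₂_of_rec hrec h0 (n + 1)
  rw [Nat.add_sub_cancel] at this
  linarith [pow_le_one₀ (norm_nonneg μ) hμ (n := n + 1)]

theorem momentum_bias_sq_mul_le_or_abs_add_le_one {c u v : ℝ} (hc0 : 0 ≤ c) (hc1 : c < 1)
    (hv0 : 0 ≤ v) (hvu : v ≤ u) (hv1 : v ≤ 1) (hu : u ≤ 1 + c) :
    ((1 - c - u) / 2) ^ 2 * (c * (1 - v)) ≤ (4 * (c * (1 - v)) - (1 + c - u) ^ 2) / 4 ∨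
      |(1 - c - u) / 2| + c * (1 - v) ≤ 1 := by
  have hp : 0 ≤ c * (1 - v) := mul_nonneg hc0 (by linarith)
  rcases le_total u (1 - c) with h | h
  · right
    rw [abs_of_nonneg (by linarith)]
    nlinarith [mul_nonneg hc0 hv0]
  · rw [or_iff_not_imp_left, not_le]
    intro hlt
    obtain ⟨D, rfl⟩ : ∃ D, u = 1 - c + 2 * D := ⟨(u - (1 - c)) / 2, by ring⟩
    have hD0 : 0 ≤ D := by linarith
    have hDc : D ≤ c := by linarith
    have hcD : (c - D) ^ 2 ≤ (1 - D) ^ 2 := by nlinarith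
    have hpD : c * (1 - v) * (1 + D) < 1 - D := by
      refine lt_of_mul_lt_mul_right ?_ (by linarith : 0 ≤ 1 - D)
      nlinarith
    rw [show (1 - c - (1 - c + 2 * D)) / 2 = -D by ring, abs_neg, abs_of_nonneg hD0]
    nlinarith [mul_nonneg hp hD0]

theorem abs_le_one_of_momentum_rec {c u v : ℝ} {y : ℕ → ℝ} (hc0 : 0 ≤ c) (hc1 : c < 1) (hv0 : 0 ≤ v)
    (hvu : v ≤ u) (hv1 : v ≤ 1) (hu : u ≤ 1 + c)
    (hrec : ∀ n, y (n + 2) = (1 + c - u) * y (n + 1) - c * (1 - v) * y n)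
    (h0 : y 0 = 1) (h1 : y 1 = 1 - u) (hdisc : 4 * (c * (1 - v)) ≤ (1 + c - u) ^ 2) (n : ℕ) :
    |y n| ≤ 1 := by
  set s := 1 + c - u
  set p := c * (1 - v)
  have hp : 0 ≤ p := mul_nonneg hc0 (by linarith)
  set d := √(s ^ 2 - 4 * p)
  have hd : d ^ 2 = s ^ 2 - 4 * p := sq_sqrt (by linarith)
  have hd0 : 0 ≤ d := sqrt_nonneg _
  have hds : d ≤ s := (sqrt_le_left (by linarith)).2 (by linarith)
  have hd2s : d ≤ 2 - s := (sqrt_le_left (by linarith)).2 (by nlinarith [mul_nonneg hc0 hv0])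
  refine abs_le_one_of_rec_of_real_roots (μ₁ := (s + d) / 2) (μ₂ := (s - d) / 2)
    (fun n => ?_) h0 (hμ₂ := by linarith) (hμ := by linarith) (hμ₁ := by linarith)
    (hy₁ := by linarith) (hy₁' := by linarith) (hsep := ?_) n
  · linear_combination hrec n - y n / 4 * hd
  · rw [h1]
    nlinarith [mul_nonneg hc0 (sub_nonneg.2 hvu)]

theorem abs_le_two_of_momentum_rec {c u v : ℝ} {y : ℕ → ℝ} (hc0 : 0 ≤ c) (hc1 : c < 1) (hv0 : 0 ≤ v)
    (hvu : v ≤ u) (hv1 : v ≤ 1) (hu : u ≤ 1 + c)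
    (hrec : ∀ n, y (n + 2) = (1 + c - u) * y (n + 1) - c * (1 - v) * y n)
    (h0 : y 0 = 1) (h1 : y 1 = 1 - u) (hdisc : (1 + c - u) ^ 2 < 4 * (c * (1 - v))) (n : ℕ) :
    |y n| ≤ 2 := by
  set s := 1 + c - u
  set p := c * (1 - v)
  set μ : ℂ := ⟨s / 2, √(4 * p - s ^ 2) / 2⟩
  have him : μ.im ^ 2 = (4 * p - s ^ 2) / 4 := by
    rw [div_pow, sq_sqrt (by linarith)]; norm_num
  have hnorm : ‖μ‖ ^ 2 = p := by
    rw [Complex.sq_norm, Complex.normSq_apply, ← sq, ← sq, him]; ring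
  have hy₁ : y 1 - μ.re = (1 - c - u) / 2 := by rw [h1]; ring
  refine abs_le_two_of_rec_of_complex_root (μ := μ) (fun n => ?_) h0 ?_ ?_ ?_ n
  · rw [hnorm, hrec n]; ring
  · nlinarith [norm_nonneg μ]
  · exact (div_pos (sqrt_pos.2 (by linarith : 0 < 4 * p - s ^ 2)) two_pos).ne'
  · rw [hy₁, hnorm, him]
    exact momentum_bias_sq_mul_le_or_abs_add_le_one hc0 hc1 hv0 hvu hv1 hu

theorem Amat_sq (c δ q lam : ℝ) :
    Amat c δ q lam ^ 2 = (1 + c - q * lam) • Amat c δ q lam - (c * (1 - δ * lam)) • 1 := by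
  ext i j
  fin_cases i <;> fin_cases j <;> simp [Amat, sq, Matrix.mul_apply, Fin.sum_univ_two] <;> ring

theorem sq_sub_four_mul_eq_mul_sub_lamDagger_mul_sub_lamDDagger {c δ q : ℝ} (hc0 : 0 ≤ c)
    (hc1 : c < 1) (hδ : 0 < δ) (hδq : δ ≤ q) (lam : ℝ) :
    (1 + c - q * lam) ^ 2 - 4 * (c * (1 - δ * lam)) =
      q ^ 2 * ((lam - lamDagger c δ q) * (lam - lamDDagger c δ q)) := by
  have hq : 0 < q := hδ.trans_le hδq
  unfold lamDagger lamDDagger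
  set α := √(q - c * δ)
  set β := √(c * (q - δ))
  have hα : α ^ 2 = q - c * δ := sq_sqrt (by nlinarith)
  have hβ : β ^ 2 = c * (q - δ) := sq_sqrt (mul_nonneg hc0 (by linarith))
  have hα0 : 0 ≤ α := sqrt_nonneg _
  have hβ0 : 0 ≤ β := sqrt_nonneg _
  have hβα : β < α := by nlinarith
  have hsum : α + β ≠ 0 := by linarith
  have hdiff : α - β ≠ 0 := by linarith
  have hprod : (α + β) ^ 2 * (α - β) ^ 2 = (q * (1 - c)) ^ 2 := by
    linear_combination (α ^ 2 - β ^ 2 + q * (1 - c)) * (hα - hβ)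
  have hsq : (α + β) ^ 2 + (α - β) ^ 2 = 2 * (q * (1 + c) - 2 * c * δ) := by
    linear_combination 2 * hα + 2 * hβ
  field_simp
  linear_combination ((1 + c - q * lam) ^ 2 - 4 * (c * (1 - δ * lam)) - q ^ 2 * lam ^ 2) * hprod +
    q ^ 2 * (1 - c) ^ 2 * lam * hsq

theorem lamDagger_le_lamDDagger {c δ q : ℝ} (hc0 : 0 ≤ c) (hc1 : c < 1) (hδ : 0 < δ)
    (hδq : δ ≤ q) : lamDagger c δ q ≤ lamDDagger c δ q := by
  have hq : 0 < q := hδ.trans_le hδq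
  have hβα : √(c * (q - δ)) < √(q - c * δ) :=
    sqrt_lt_sqrt (mul_nonneg hc0 (by linarith)) (by nlinarith)
  refine div_le_div_of_nonneg_left (sq_nonneg _) (by nlinarith) ?_
  nlinarith [sqrt_nonneg (c * (q - δ))]

/-- If `δλ ≤ 1` and `qλ ≤ 1+c`, then for every `k ∈ ℕ` the second
coordinate of `A(λ)^k · (1,1)ᵀ` is bounded by `1` in absolute value on `I₁ ∪ I₃`
and by `2` on `I₂`. -/
theorem momentum_matrix_pow_bias_coord_bound
    (c δ q lam : ℝ) (hc0 : 0 ≤ c) (hc1 : c < 1) (hδ : 0 < δ) (hδq : δ ≤ q)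
    (hlam : 0 ≤ lam) (hδlam : δ * lam ≤ 1) (hqlam : q * lam ≤ 1 + c) (k : ℕ) :
    ((lam ≤ lamDagger c δ q ∨ lamDDagger c δ q ≤ lam) →
      |((Amat c δ q lam ^ k).mulVec ![1, 1]) 1| ≤ 1) ∧
    ((lamDagger c δ q < lam ∧ lam < lamDDagger c δ q) →
      |((Amat c δ q lam ^ k).mulVec ![1, 1]) 1| ≤ 2) := by
  set y : ℕ → ℝ := fun k => (Amat c δ q lam ^ k *ᵥ ![1, 1]) 1
  have hrec : ∀ n, y (n + 2) = (1 + c - q * lam) * y (n + 1) - c * (1 - δ * lam) * y n :=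
    fun n => by
      simp only [y, pow_add_two_mulVec (Amat_sq c δ q lam), Pi.sub_apply, Pi.smul_apply,
        smul_eq_mul]
  have h0 : y 0 = 1 := by simp [y]
  have h1 : y 1 = 1 - q * lam := by simp [y, Amat]; ring
  have hv0 : 0 ≤ δ * lam := mul_nonneg hδ.le hlam
  have hvu : δ * lam ≤ q * lam := mul_le_mul_of_nonneg_right hδq hlam
  have hq : 0 < q := hδ.trans_le hδq
  have hdisc := sq_sub_four_mul_eq_mul_sub_lamDagger_mul_sub_lamDDagger hc0 hc1 hδ hδq lam
  have hord := lamDagger_le_lamDDagger hc0 hc1 hδ hδq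
  refine ⟨fun h => abs_le_one_of_momentum_rec hc0 hc1 hv0 hvu hδlam hqlam hrec h0 h1 ?_ k,
    fun h => abs_le_two_of_momentum_rec hc0 hc1 hv0 hvu hδlam hqlam hrec h0 h1 ?_ k⟩
  · rw [← sub_nonneg, hdisc]
    rcases h with h | h
    · exact mul_nonneg (sq_nonneg q) (mul_nonneg_of_nonpos_of_nonpos (by linarith) (by linarith))
    · exact mul_nonneg (sq_nonneg q) (mul_nonneg (by linarith) (by linarith))
  · rw [← sub_neg, hdisc]
    exact mul_neg_of_pos_of_neg (by positivity) (mul_neg_of_pos_of_neg (by linarith) (by linarith))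

end
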